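/- Let (M,{·,·}) be a Poisson manifold with Poisson tensor B, S a decomposed subset of M, and D ⊂ TM|_S a Poisson integrable generalized distribution adapted to the decomposition of S; assume C^∞_{S/D_S} has the (D,D_S)-local extension property. If for every m ∈ S one has B^♯(Δ_m) ⊂ [Δ_m^S]°, then (M,{·,·},D,S) is Poisson reducible, i.e. the bracket {f,g}^{S/D_S}(π_{D_S}(m)) := {F,G}(m), computed via local D-invariant extensions F,G, yields a well-defined presheaf of Poisson algebras on S/D_S. -/

import Mathlib

open Manifold Set Function
local notation "∞" => (⊤ : ℕ∞)

noncomputable section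

/-- The annihilator of a subspace `W ⊆ V` inside the topological dual of `V`
(for `W` a space of tangent vectors this is the conormal space `W°`). -/
def clmAnnihilator {V : Type*} [AddCommGroup V] [Module ℝ V] [TopologicalSpace V]
    (W : Submodule ℝ V) : Submodule ℝ (V →L[ℝ] ℝ) where
  carrier := {α | ∀ v ∈ W, α v = 0}
  add_mem' := by intro a b ha hb v hv; simp [ha v hv, hb v hv]
  zero_mem' := by intro v hv; simp
  smul_mem' := by intro c a ha v hv; simp [ha v hv]

variable {E : Type*} [NormedAddCommGroup E] [NormedSpace ℝ E]
  {H : Type*} [TopologicalSpace H] {I : ModelWithCorners ℝ E H}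
  {M : Type*} [TopologicalSpace M] [ChartedSpace H M] [IsManifold I (⊤ : ℕ∞) M]

/-- The Poisson bracket of two (locally defined) functions computed through a Poisson
tensor `B`, via `{f, g}(m) = ⟨df(m), B^♯(dg(m))⟩`. -/
def pBracket (B : ∀ m : M, (TangentSpace I m →L[ℝ] ℝ) →ₗ[ℝ] TangentSpace I m)
    (f g : M → ℝ) (m : M) : ℝ :=
  mfderiv I 𝓘(ℝ, ℝ) f m (B m (mfderiv I 𝓘(ℝ, ℝ) g m))

/-- `B` is a Poisson tensor: it is antisymmetric and its bracket satisfies the Jacobi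
identity on locally defined smooth functions. -/
def IsPoissonTensor (B : ∀ m : M, (TangentSpace I m →L[ℝ] ℝ) →ₗ[ℝ] TangentSpace I m) :
    Prop :=
  (∀ (m : M) (α β : TangentSpace I m →L[ℝ] ℝ), α (B m β) = - β (B m α)) ∧
  ∀ (U : Set M), IsOpen U → ∀ f g h : M → ℝ,
    ContMDiffOn I 𝓘(ℝ, ℝ) (⊤ : ℕ∞) f U → ContMDiffOn I 𝓘(ℝ, ℝ) (⊤ : ℕ∞) g U →
      ContMDiffOn I 𝓘(ℝ, ℝ) (⊤ : ℕ∞) h U → ∀ m ∈ U,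
      pBracket B f (pBracket B g h) m + pBracket B g (pBracket B h f) m
        + pBracket B h (pBracket B f g) m = 0

/-- A distribution `D` along `S ⊆ M` is canonical (Poisson) if brackets of locally
defined `D`-invariant functions are `D`-invariant :
`df|_D = dg|_D = 0` implies `d{f,g}|_D = 0`. -/
def IsCanonicalDistribution (B : ∀ m : M, (TangentSpace I m →L[ℝ] ℝ) →ₗ[ℝ] TangentSpace I m)
    (S : Set M) (D : ∀ m : M, Submodule ℝ (TangentSpace I m)) : Prop :=
  ∀ (U : Set M), IsOpen U → ∀ f g : M → ℝ,
    ContMDiffOn I 𝓘(ℝ, ℝ) (⊤ : ℕ∞) f U → ContMDiffOn I 𝓘(ℝ, ℝ) (⊤ : ℕ∞) g U →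
    (∀ z ∈ U ∩ S, ∀ v ∈ D z, mfderiv I 𝓘(ℝ, ℝ) f z v = 0) →
    (∀ z ∈ U ∩ S, ∀ v ∈ D z, mfderiv I 𝓘(ℝ, ℝ) g z v = 0) →
    ∀ z ∈ U ∩ S, ∀ v ∈ D z, mfderiv I 𝓘(ℝ, ℝ) (pBracket B f g) z v = 0

/-- `F` is a smooth function on the open set `U` which is `D`-invariant along `S`,
i.e. `dF` annihilates `D` at every point of `U ∩ S`.  Such an `F` is a local
`D`-invariant extension of its restriction to `S ∩ U`. -/
def IsDInvariantOn (S : Set M) (D : ∀ m : M, Submodule ℝ (TangentSpace I m))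
    (F : M → ℝ) (U : Set M) : Prop :=
  IsOpen U ∧ ContMDiffOn I 𝓘(ℝ, ℝ) (⊤ : ℕ∞) F U ∧
    ∀ z ∈ U ∩ S, ∀ v ∈ D z, mfderiv I 𝓘(ℝ, ℝ) F z v = 0

/-- Poisson reducibility of `(M, {·,·}, D, S)` : the formula
`{f, g}^{S/D_S}(π_{D_S}(m)) := {F, G}(m)`, computed on local `D`-invariant extensions
`F, G`, does not depend on the chosen extensions (two local `D`-invariant extensions
induce the same function on the quotient `S/D_S` exactly when they agree on `S`), so
that it yields a well-defined presheaf of Poisson algebras on `S/D_S`. -/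
def IsPoissonReducible (B : ∀ m : M, (TangentSpace I m →L[ℝ] ℝ) →ₗ[ℝ] TangentSpace I m)
    (S : Set M) (D : ∀ m : M, Submodule ℝ (TangentSpace I m)) : Prop :=
  ∀ m ∈ S, ∀ (U₁ U₂ : Set M) (F₁ F₂ G₁ G₂ : M → ℝ),
    m ∈ U₁ → m ∈ U₂ →
    IsDInvariantOn S D F₁ U₁ → IsDInvariantOn S D F₂ U₂ →
    IsDInvariantOn S D G₁ U₁ → IsDInvariantOn S D G₂ U₂ →
    (∀ z ∈ U₁ ∩ U₂ ∩ S, F₁ z = F₂ z) → (∀ z ∈ U₁ ∩ U₂ ∩ S, G₁ z = G₂ z) →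
    pBracket B F₁ G₁ m = pBracket B F₂ G₂ m

variable {E' : Type*} [NormedAddCommGroup E'] [NormedSpace ℝ E']
  {H' : Type*} [TopologicalSpace H'] {J : ModelWithCorners ℝ E' H'}
  {N : Type*} [TopologicalSpace N] [ChartedSpace H' N] [IsManifold J (⊤ : ℕ∞) N]

/-- The tangent space `T_{ι n} S ⊆ T_{ι n} M` of an immersed submanifold `ι : N → M`. -/
def immTangent (ι : N → M) (n : N) : Submodule ℝ (TangentSpace I (ι n)) :=
  LinearMap.range (mfderiv J I ι n).toLinearMap

/-- The immersed submanifold `ι : N → M` is cosymplectic for the Poisson tensor `B` :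
`B^♯((TS)°) ∩ TS = 0` and `T_sS + T_s L_s = T_s M` for every `s ∈ S`, where the tangent
space to the symplectic leaf `L_s` is the characteristic subspace `B^♯(T_s^*M)`. -/
def IsCosymplectic (B : ∀ m : M, (TangentSpace I m →L[ℝ] ℝ) →ₗ[ℝ] TangentSpace I m)
    (ι : N → M) : Prop :=
  ∀ n : N,
    Submodule.map (B (ι n)) (clmAnnihilator (immTangent (I := I) (J := J) ι n))
        ⊓ immTangent (I := I) (J := J) ι n = ⊥ ∧
    immTangent (I := I) (J := J) ι n ⊔ LinearMap.range (B (ι n)) = ⊤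

/-- The set `Δ_m` of differentials at `m` of local `D`-invariant functions. -/
def Delta (S : Set M) (D : ∀ m : M, Submodule ℝ (TangentSpace I m)) (m : M) :
    Set (TangentSpace I m →L[ℝ] ℝ) :=
  {α | ∃ (U : Set M) (F : M → ℝ), m ∈ U ∧ IsDInvariantOn S D F U ∧
        α = mfderiv I 𝓘(ℝ, ℝ) F m}

/-- The subset `Δ_m^S ⊆ Δ_m` of differentials of local `D`-invariant functions which are
constant on a neighborhood of `m` in `S`. -/
def DeltaS (S : Set M) (D : ∀ m : M, Submodule ℝ (TangentSpace I m)) (m : M) :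
    Set (TangentSpace I m →L[ℝ] ℝ) :=
  {α | ∃ (U : Set M) (F : M → ℝ), m ∈ U ∧ IsDInvariantOn S D F U ∧
        α = mfderiv I 𝓘(ℝ, ℝ) F m ∧
        ∃ V : Set M, IsOpen V ∧ m ∈ V ∧ ∀ z ∈ V ∩ S, F z = F m}

/-- **Singular Poisson reduction.**  Let `(M, {·,·})` be a Poisson manifold with Poisson
tensor `B`, `S` a decomposed subset of `M` (with pieces `pieces`, piecewise tangent
spaces `T`), and `D ⊆ TM|_S` a Poisson (canonical) integrable generalized distribution
adapted to the decomposition; assume `C^∞_{S/D_S}` has the `(D, D_S)`-local extension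
property.  If `B^♯(Δ_m) ⊆ [Δ_m^S]°` for every `m ∈ S`, then `(M, {·,·}, D, S)` is
Poisson reducible. -/
theorem singular_poisson_reduction
    (B : ∀ m : M, (TangentSpace I m →L[ℝ] ℝ) →ₗ[ℝ] TangentSpace I m)
    (hB : IsPoissonTensor B)
    (S : Set M)
    -- `S` is a decomposed subset of `M`, with pieces `pieces` :
    (pieces : Set (Set M))
    (hcover : ⋃₀ pieces = S)
    (hdisj : ∀ p ∈ pieces, ∀ q ∈ pieces, (p ∩ q).Nonempty → p = q)
    (hlocfin : ∀ m ∈ S, ∃ U ∈ nhds m, {p ∈ pieces | (p ∩ U).Nonempty}.Finite)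
    (hloccl : ∀ p ∈ pieces, IsLocallyClosed p)
    (hfrontier : ∀ p ∈ pieces, ∀ q ∈ pieces, (p ∩ closure q).Nonempty → p ⊆ closure q)
    -- `T m` is the tangent space at `m` of the piece through `m`, so that `D_S = D ∩ T` :
    (T : ∀ m : M, Submodule ℝ (TangentSpace I m))
    -- `D` is a canonical (Poisson) distribution along `S` :
    (D : ∀ m : M, Submodule ℝ (TangentSpace I m))
    (hcanon : IsCanonicalDistribution B S D)
    -- `C^∞_{S/D_S}` has the `(D, D_S)`-local extension property :
    (hext : ∀ m ∈ S, ∀ (U : Set M) (F : M → ℝ), IsOpen U → m ∈ U →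
      ContMDiffOn I 𝓘(ℝ, ℝ) (⊤ : ℕ∞) F U →
      (∀ z ∈ U ∩ S, ∀ v ∈ D z ⊓ T z, mfderiv I 𝓘(ℝ, ℝ) F z v = 0) →
      ∃ (U' : Set M) (G : M → ℝ), IsOpen U' ∧ m ∈ U' ∧
        IsDInvariantOn S D G U' ∧ ∀ z ∈ U ∩ U' ∩ S, G z = F z)
    -- the main hypothesis : `B^♯(Δ_m) ⊆ [Δ_m^S]°` for all `m ∈ S` :
    (hmain : ∀ m ∈ S, ∀ α ∈ Delta S D m, ∀ β ∈ DeltaS S D m, β (B m α) = 0) :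
    IsPoissonReducible B S D := by
  intro m hm U₁ U₂ F₁ F₂ G₁ G₂ hmU₁ hmU₂ hF₁ hF₂ hG₁ hG₂ hF hG
  obtain ⟨hU₁open, hF₁smooth, hF₁inv⟩ := hF₁
  obtain ⟨hU₂open, hF₂smooth, hF₂inv⟩ := hF₂
  obtain ⟨_, hG₁smooth, hG₁inv⟩ := hG₁
  obtain ⟨_, hG₂smooth, hG₂inv⟩ := hG₂
  have hUopen : IsOpen (U₁ ∩ U₂) := hU₁open.inter hU₂open
  have hmU : m ∈ U₁ ∩ U₂ := ⟨hmU₁, hmU₂⟩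
  have diff : ∀ (f : M → ℝ) (U : Set M), IsOpen U → ContMDiffOn I 𝓘(ℝ, ℝ) (⊤ : ℕ∞) f U →
      ∀ z ∈ U, MDifferentiableAt I 𝓘(ℝ, ℝ) f z := fun f U hU hf z hz =>
    (hf.contMDiffAt (hU.mem_nhds hz)).mdifferentiableAt (by simp)
  -- the differential of a difference kills `v` if both differentials do
  have subinv : ∀ (f g : M → ℝ) (z : M) (v : TangentSpace I z),
      MDifferentiableAt I 𝓘(ℝ, ℝ) f z → MDifferentiableAt I 𝓘(ℝ, ℝ) g z →
      mfderiv I 𝓘(ℝ, ℝ) f z v = 0 → mfderiv I 𝓘(ℝ, ℝ) g z v = 0 →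
      mfderiv I 𝓘(ℝ, ℝ) (f - g) z v = 0 := by
    intro f g z v hf hg h1 h2
    obtain ⟨φ, hφd, hφ1⟩ : ∃ φ : TangentSpace I z →L[ℝ] ℝ,
        HasMFDerivAt I 𝓘(ℝ, ℝ) f z φ ∧ φ v = 0 :=
      ⟨mfderiv I 𝓘(ℝ, ℝ) f z, hf.hasMFDerivAt, h1⟩
    obtain ⟨ψ, hψd, hψ1⟩ : ∃ ψ : TangentSpace I z →L[ℝ] ℝ,
        HasMFDerivAt I 𝓘(ℝ, ℝ) g z ψ ∧ ψ v = 0 :=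
      ⟨mfderiv I 𝓘(ℝ, ℝ) g z, hg.hasMFDerivAt, h2⟩
    rw [(hφd.sub hψd).mfderiv]
    show φ v - ψ v = 0
    rw [hφ1, hψ1, sub_zero]
  -- typed differentials at `m`
  obtain ⟨φ₁, hφ₁d, hφ₁⟩ : ∃ φ : TangentSpace I m →L[ℝ] ℝ,
      HasMFDerivAt I 𝓘(ℝ, ℝ) F₁ m φ ∧ φ = mfderiv I 𝓘(ℝ, ℝ) F₁ m :=
    ⟨mfderiv I 𝓘(ℝ, ℝ) F₁ m, (diff F₁ U₁ hU₁open hF₁smooth m hmU₁).hasMFDerivAt, rfl⟩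
  obtain ⟨φ₂, hφ₂d, hφ₂⟩ : ∃ φ : TangentSpace I m →L[ℝ] ℝ,
      HasMFDerivAt I 𝓘(ℝ, ℝ) F₂ m φ ∧ φ = mfderiv I 𝓘(ℝ, ℝ) F₂ m :=
    ⟨mfderiv I 𝓘(ℝ, ℝ) F₂ m, (diff F₂ U₂ hU₂open hF₂smooth m hmU₂).hasMFDerivAt, rfl⟩
  obtain ⟨γ₁, hγ₁d, hγ₁⟩ : ∃ γ : TangentSpace I m →L[ℝ] ℝ,
      HasMFDerivAt I 𝓘(ℝ, ℝ) G₁ m γ ∧ γ = mfderiv I 𝓘(ℝ, ℝ) G₁ m :=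
    ⟨mfderiv I 𝓘(ℝ, ℝ) G₁ m, (diff G₁ U₁ hU₁open hG₁smooth m hmU₁).hasMFDerivAt, rfl⟩
  obtain ⟨γ₂, hγ₂d, hγ₂⟩ : ∃ γ : TangentSpace I m →L[ℝ] ℝ,
      HasMFDerivAt I 𝓘(ℝ, ℝ) G₂ m γ ∧ γ = mfderiv I 𝓘(ℝ, ℝ) G₂ m :=
    ⟨mfderiv I 𝓘(ℝ, ℝ) G₂ m, (diff G₂ U₂ hU₂open hG₂smooth m hmU₂).hasMFDerivAt, rfl⟩
  -- the difference of two extensions agreeing on S lies in `DeltaS`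
  have key : ∀ (f₁ f₂ : M → ℝ) (α₁ α₂ : TangentSpace I m →L[ℝ] ℝ),
      HasMFDerivAt I 𝓘(ℝ, ℝ) f₁ m α₁ → HasMFDerivAt I 𝓘(ℝ, ℝ) f₂ m α₂ →
      ContMDiffOn I 𝓘(ℝ, ℝ) (⊤ : ℕ∞) f₁ U₁ → ContMDiffOn I 𝓘(ℝ, ℝ) (⊤ : ℕ∞) f₂ U₂ →
      (∀ z ∈ U₁ ∩ S, ∀ v ∈ D z, mfderiv I 𝓘(ℝ, ℝ) f₁ z v = 0) →
      (∀ z ∈ U₂ ∩ S, ∀ v ∈ D z, mfderiv I 𝓘(ℝ, ℝ) f₂ z v = 0) →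
      (∀ z ∈ U₁ ∩ U₂ ∩ S, f₁ z = f₂ z) →
      α₁ - α₂ ∈ DeltaS S D m := by
    intro f₁ f₂ α₁ α₂ hα₁ hα₂ hs₁ hs₂ hi₁ hi₂ hagree
    refine ⟨U₁ ∩ U₂, f₁ - f₂, hmU, ⟨hUopen, ?_, ?_⟩, ((hα₁.sub hα₂).mfderiv).symm,
      U₁ ∩ U₂, hUopen, hmU, ?_⟩
    · exact (hs₁.mono inter_subset_left).sub (hs₂.mono inter_subset_right)
    · intro z hz v hv
      exact subinv f₁ f₂ z v (diff f₁ U₁ hU₁open hs₁ z hz.1.1)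
        (diff f₂ U₂ hU₂open hs₂ z hz.1.2)
        (hi₁ z ⟨hz.1.1, hz.2⟩ v hv) (hi₂ z ⟨hz.1.2, hz.2⟩ v hv)
    · intro z hz
      have h1 := hagree z ⟨hz.1, hz.2⟩
      have h2 := hagree m ⟨hmU, hm⟩
      simp [Pi.sub_apply, h1, h2]
  have hβ : φ₁ - φ₂ ∈ DeltaS S D m :=
    key F₁ F₂ φ₁ φ₂ hφ₁d hφ₂d hF₁smooth hF₂smooth hF₁inv hF₂inv hF
  have hγ : γ₁ - γ₂ ∈ DeltaS S D m :=
    key G₁ G₂ γ₁ γ₂ hγ₁d hγ₂d hG₁smooth hG₂smooth hG₁inv hG₂inv hG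
  have hαG₁ : γ₁ ∈ Delta S D m :=
    ⟨U₁, G₁, hmU₁, ⟨hU₁open, hG₁smooth, hG₁inv⟩, hγ₁⟩
  have hαF₂ : φ₂ ∈ Delta S D m :=
    ⟨U₂, F₂, hmU₂, ⟨hU₂open, hF₂smooth, hF₂inv⟩, hφ₂⟩
  have e₁ : φ₁ (B m γ₁) - φ₂ (B m γ₁) = 0 := hmain m hm _ hαG₁ _ hβ
  have e₂ : γ₁ (B m φ₂) - γ₂ (B m φ₂) = 0 := hmain m hm _ hαF₂ _ hγ
  have a₁ := hB.1 m φ₂ γ₁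
  have a₂ := hB.1 m φ₂ γ₂
  have final : φ₁ (B m γ₁) = φ₂ (B m γ₂) := by linarith
  have b₁ : pBracket B F₁ G₁ m = φ₁ (B m γ₁) := by rw [hφ₁, hγ₁]; rfl
  have b₂ : pBracket B F₂ G₂ m = φ₂ (B m γ₂) := by rw [hφ₂, hγ₂]; rfl
  rw [b₁, b₂, final]

end
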